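/- arXiv:1007.1202 — 6 statements merged into one kernel-verified Lean document; each statement's English description precedes it below -/
import Mathlib

section
/- Let M be a module over the ring R = ℤ[t]/(t²−1) fitting into a short exact sequence of R-modules 0 → R/I → M → R/I → 0, where I = (t−1). Then the sequence splits, i.e., M is isomorphic as an R-module to (R/I) ⊕ (R/I). The same holds with I replaced by J = (t+1). -/
noncomputable section

abbrev R : Type := Polynomial ℤ ⧸ Ideal.span ({Polynomial.X ^ 2 - 1} : Set (Polynomial ℤ))

def t : R := Ideal.Quotient.mk _ Polynomial.X

def I : Ideal R := Ideal.span {t - 1}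
def J : Ideal R := Ideal.span {t + 1}

open Polynomial

abbrev P : Ideal (Polynomial ℤ) := Ideal.span ({X ^ 2 - 1} : Set (Polynomial ℤ))

abbrev mkP : Polynomial ℤ →+* R := Ideal.Quotient.mk P

lemma torsion_free (a : ℤ) (ha : a ^ 2 = 1) (c' : Polynomial ℤ) (hc' : eval a c' ≠ 0)
    (K : Ideal R) (hK : K = Ideal.span {mkP (X - C a)}) :
    ∀ x : R ⧸ K, (mkP c' : R) • x = 0 → x = 0 := by
  have hlift : ∀ p ∈ P, evalRingHom a p = 0 := by
    intro p hp
    rw [Ideal.mem_span_singleton] at hp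
    obtain ⟨q, rfl⟩ := hp
    simp [ha]
  set φ : R →+* ℤ := Ideal.Quotient.lift P (evalRingHom a) hlift with hφ
  have hφmk : ∀ p : Polynomial ℤ, φ (mkP p) = eval a p := fun p => rfl
  have hker : ∀ y : R, φ y = 0 → y ∈ K := by
    intro y hy
    obtain ⟨p, rfl⟩ := Ideal.Quotient.mk_surjective y
    rw [hφmk] at hy
    obtain ⟨q, hq⟩ := dvd_iff_isRoot.mpr hy
    rw [hK, hq, map_mul]
    exact Ideal.mul_mem_right _ _ (Ideal.subset_span rfl)
  have hKker : ∀ y ∈ K, φ y = 0 := by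
    intro y hy
    rw [hK] at hy
    have : Ideal.span ({mkP (X - C a)} : Set R) ≤ RingHom.ker φ := by
      rw [Ideal.span_le, Set.singleton_subset_iff, SetLike.mem_coe, RingHom.mem_ker, hφmk]
      simp
    exact this hy
  set ψ : R ⧸ K →+* ℤ := Ideal.Quotient.lift K φ hKker with hψ
  have hψinj : Function.Injective ψ := by
    intro u v huv
    obtain ⟨y, rfl⟩ := Ideal.Quotient.mk_surjective u
    obtain ⟨z, rfl⟩ := Ideal.Quotient.mk_surjective v
    rw [Ideal.Quotient.eq]
    apply hker
    have h1 : φ y = φ z := huv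
    rw [map_sub, h1, sub_self]
  intro x hx
  obtain ⟨y, rfl⟩ := Ideal.Quotient.mk_surjective x
  have hsm : (mkP c' : R) • (Ideal.Quotient.mk K y) = Ideal.Quotient.mk K (mkP c' * y) := rfl
  rw [hsm] at hx
  have := congrArg ψ hx
  rw [map_zero] at this
  have heq : ψ (Ideal.Quotient.mk K (mkP c' * y)) = eval a c' * ψ (Ideal.Quotient.mk K y) := by
    have : ψ (Ideal.Quotient.mk K (mkP c' * y)) = φ (mkP c' * y) := rfl
    rw [this, map_mul, hφmk]; rfl
  rw [heq] at this
  rcases mul_eq_zero.mp this with h | h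
  · exact absurd h hc'
  · apply hψinj
    rw [h, map_zero]

lemma split_case (c c' : Polynomial ℤ)
    (hcc' : (mkP (c * c') : R) = 0)
    (K : Ideal R) (hK : K = Ideal.span {mkP c})
    (htor : ∀ x : R ⧸ K, (mkP c' : R) • x = 0 → x = 0) :
    ∀ (M : Type) [AddCommGroup M] [Module R M]
      (f : (R ⧸ K) →ₗ[R] M) (g : M →ₗ[R] (R ⧸ K)),
      Function.Injective f → Function.Surjective g →
      LinearMap.range f = LinearMap.ker g →
      Nonempty (M ≃ₗ[R] ((R ⧸ K) × (R ⧸ K))) := by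
  intro M _ _ f g hf hg hex
  obtain ⟨m, hm⟩ := hg (Ideal.Quotient.mk K 1)
  have smul_mk : ∀ r : R, r • (Ideal.Quotient.mk K 1 : R ⧸ K) = Ideal.Quotient.mk K r := by
    intro r
    have : r • (Ideal.Quotient.mk K 1 : R ⧸ K) = Ideal.Quotient.mk K (r * 1) := rfl
    rw [this, mul_one]
  have h1 : g ((mkP c : R) • m) = 0 := by
    rw [map_smul, hm, smul_mk, Ideal.Quotient.eq_zero_iff_mem, hK]
    exact Ideal.subset_span rfl
  obtain ⟨x, hx⟩ : (mkP c : R) • m ∈ LinearMap.range f := by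
    rw [hex]; exact h1
  have h2 : f ((mkP c' : R) • x) = 0 := by
    rw [map_smul, hx, smul_smul, ← map_mul, mul_comm, hcc']
    exact zero_smul R m
  have hx0 : x = 0 := htor x (by apply hf; rw [h2, map_zero])
  have hcm : (mkP c : R) • m = 0 := by rw [← hx, hx0, map_zero]
  have hle : K ≤ LinearMap.ker (LinearMap.toSpanSingleton R M m) := by
    rw [hK, Ideal.span_le, Set.singleton_subset_iff]
    exact hcm
  set s : (R ⧸ K) →ₗ[R] M := Submodule.liftQ K (LinearMap.toSpanSingleton R M m) hle with hs
  have hgs : g.comp s = LinearMap.id := by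
    apply Submodule.linearMap_qext
    apply LinearMap.ext
    intro r
    simp only [LinearMap.coe_comp, Function.comp_apply, Submodule.mkQ_apply,
      LinearMap.id_comp]
    have h3 : s (Submodule.Quotient.mk r) = r • m := rfl
    rw [h3, map_smul, hm, smul_mk]
    rfl
  exact ⟨(lequivProdOfRightSplitExact hf hex hgs).symm⟩

theorem extension_RmodI_by_RmodI_splits :
    (∀ (M : Type) [AddCommGroup M] [Module R M]
      (f : (R ⧸ I) →ₗ[R] M) (g : M →ₗ[R] (R ⧸ I)),
      Function.Injective f → Function.Surjective g →
      LinearMap.range f = LinearMap.ker g →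
      Nonempty (M ≃ₗ[R] ((R ⧸ I) × (R ⧸ I)))) ∧
    (∀ (M : Type) [AddCommGroup M] [Module R M]
      (f : (R ⧸ J) →ₗ[R] M) (g : M →ₗ[R] (R ⧸ J)),
      Function.Injective f → Function.Surjective g →
      LinearMap.range f = LinearMap.ker g →
      Nonempty (M ≃ₗ[R] ((R ⧸ J) × (R ⧸ J)))) := by
  have htI : (t : R) - 1 = mkP (X - C 1) := by
    unfold t
    rw [map_sub, C_1, map_one]
  have htJ : (t : R) + 1 = mkP (X + C 1) := by
    unfold t
    rw [map_add, C_1, map_one]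
  have hI : I = Ideal.span {mkP (X - C 1)} := by rw [I, htI]
  have hJ : J = Ideal.span {mkP (X + C 1)} := by rw [J, htJ]
  constructor
  · refine split_case (X - C 1) (X + C 1) ?_ I hI ?_
    · rw [Ideal.Quotient.eq_zero_iff_mem]
      rw [Ideal.mem_span_singleton]
      exact ⟨1, by rw [C_1]; ring⟩
    · exact torsion_free 1 (by norm_num) (X + C 1) (by simp) I hI
  · refine split_case (X + C 1) (X - C 1) ?_ J hJ ?_
    · rw [Ideal.Quotient.eq_zero_iff_mem]
      rw [Ideal.mem_span_singleton]
      exact ⟨1, by rw [C_1]; ring⟩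
    · have hJ' : J = Ideal.span {mkP (X - C (-1))} := by
        rw [hJ]
        congr 2
        rw [map_add, map_sub]
        simp
      exact torsion_free (-1) (by norm_num) (X - C 1) (by simp) J hJ'
end
end

section
/- For the ring R = ℤ[t]/(t²−1), the group of R-module homomorphisms Hom_R(I, R/I) is zero, where I = (t−1). -/
noncomputable section

open Polynomial

lemma key (w : R) (hw : (t + 1) * w ∈ I) : w ∈ I := by
  obtain ⟨p, rfl⟩ := Ideal.Quotient.mk_surjective w
  rw [I, Ideal.mem_span_singleton] at hw
  obtain ⟨a, ha⟩ := hw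
  obtain ⟨q, rfl⟩ := Ideal.Quotient.mk_surjective a
  have h1 : (Ideal.Quotient.mk (Ideal.span ({Polynomial.X ^ 2 - 1} : Set (Polynomial ℤ)))
      ((X + 1) * p - (X - 1) * q) : R) = 0 := by
    rw [map_sub, map_mul, map_mul, map_add, map_sub, map_one, sub_eq_zero]
    simpa [t, mul_comm] using ha
  rw [Ideal.Quotient.eq_zero_iff_mem, Ideal.mem_span_singleton] at h1
  obtain ⟨c, hc⟩ := h1
  have hdvd : (X - 1 : Polynomial ℤ) ∣ (X + 1) * p := by
    have h2 : (X + 1) * p = (X - 1) * q + (X ^ 2 - 1) * c := by linear_combination hc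
    rw [h2]
    exact dvd_add ⟨q, rfl⟩ ⟨(X + 1) * c, by ring⟩
  have hprime : Prime (X - 1 : Polynomial ℤ) := by
    simpa using Polynomial.prime_X_sub_C (1 : ℤ)
  have hnd : ¬ (X - 1 : Polynomial ℤ) ∣ (X + 1) := by
    intro h
    have := Polynomial.eval_dvd (x := 1) h
    simp at this
  obtain ⟨d, hd⟩ := (hprime.dvd_mul.mp hdvd).resolve_left hnd
  rw [I, Ideal.mem_span_singleton]
  refine ⟨Ideal.Quotient.mk _ d, ?_⟩
  rw [hd]
  simp [t, map_mul, map_sub, map_one]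

theorem hom_I_to_RmodI_eq_zero (f : I →ₗ[R] (R ⧸ I)) : f = 0 := by
  have ht : t - 1 ∈ I := Ideal.subset_span rfl
  set e : I := ⟨t - 1, ht⟩ with he
  have h0 : (t + 1) * (t - 1) = 0 := by
    have h1 : (t + 1) * (t - 1) = Ideal.Quotient.mk _ ((X + 1) * (X - 1)) := by
      simp [t, map_mul, map_add, map_sub, map_one]
    rw [h1, Ideal.Quotient.eq_zero_iff_mem]
    have h2 : ((X : Polynomial ℤ) + 1) * (X - 1) = X ^ 2 - 1 := by ring
    rw [h2]
    exact Ideal.subset_span rfl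
  have he0 : (t + 1) • e = 0 := by
    apply Subtype.ext
    simpa using h0
  have hfe : (t + 1) • f e = 0 := by
    rw [← map_smul, he0, map_zero]
  have hfe0 : f e = 0 := by
    obtain ⟨w, hw⟩ := Ideal.Quotient.mk_surjective (f e)
    rw [← hw] at hfe ⊢
    have hsm : (t + 1) • (Ideal.Quotient.mk I w) = Ideal.Quotient.mk I ((t + 1) * w) := rfl
    rw [hsm, Ideal.Quotient.eq_zero_iff_mem] at hfe
    rw [Ideal.Quotient.eq_zero_iff_mem]
    exact key w hfe
  ext x
  obtain ⟨c, hc⟩ := Ideal.mem_span_singleton.mp (by rw [← I]; exact x.2)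
  have hx : (x : I) = c • e := by
    apply Subtype.ext
    simpa [mul_comm] using hc
  rw [hx, map_smul, hfe0, smul_zero]
  rfl
end
end

section
/- Let M be a module over the ring R = ℤ[t]/(t²−1) fitting into a short exact sequence of R-modules 0 → R/I → M → R/J → 0 or into a short exact sequence 0 → R/J → M → R/I → 0, where I = (t−1) and J = (t+1). Then either M is isomorphic as an R-module to R, or M is isomorphic as an R-module to (R/I) ⊕ (R/J). -/
/-!
Write the extension as `0 → R/(u) → M → R/(v) → 0` with `{u, v} = {t - 1, t + 1}`, so `u v = 0`.
Lift `1 ∈ R/(v)` to `m ∈ M`; then `v • m` lies in the copy of `R/(u)`. Modifying `m` by that copy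
changes `v • m` by `v • R/(u)`, and `R/(u, v) = R/(t - 1, 2) = 𝔽₂`, so `v • m` can be made `0` or
the image `e` of `1 ∈ R/(u)`. If `v • m = 0`, then `m` spans a complement and `M` splits. If
`v • m = e`, then `m` generates `M` and its annihilator is `0`, so `M ≅ R`.
-/

noncomputable section

open Function

theorem Ideal.Quotient.smul_one {A : Type*} [CommRing A] (P : Ideal A) (r : A) :
    r • (1 : A ⧸ P) = Ideal.Quotient.mk P r := by
  rw [Algebra.smul_def, mul_one, Ideal.Quotient.algebraMap_eq]

section Extension

variable {A M : Type*} [CommRing A] [AddCommGroup M] [Module A M] {u v : A}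
  {g : M →ₗ[A] A ⧸ Ideal.span {v}}

theorem nonempty_linearEquiv_prod_of_smul_eq_zero {N : Type*} [AddCommGroup N] [Module A N]
    {f : N →ₗ[A] M} (hf : Injective f) (hfg : Exact f g) {m : M} (hm : g m = 1)
    (hvm : v • m = 0) : Nonempty (M ≃ₗ[A] N × (A ⧸ Ideal.span {v})) := by
  have hker : Ideal.span {v} ≤ LinearMap.ker (LinearMap.toSpanSingleton A M m) := by
    rwa [Ideal.span_le, Set.singleton_subset_iff]
  let s := (Ideal.span {v}).liftQ (LinearMap.toSpanSingleton A M m) hker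
  have hs : g ∘ₗ s = LinearMap.id :=
    Submodule.linearMap_qext _ <| LinearMap.ext_ring <| by
      simp only [s, LinearMap.comp_apply, Submodule.mkQ_apply, Submodule.liftQ_apply,
        LinearMap.toSpanSingleton_apply, one_smul, hm, LinearMap.id_apply]
      rfl
  exact ⟨(hfg.splitSurjectiveEquiv hf ⟨s, hs⟩).1⟩

theorem nonempty_linearEquiv_self_of_smul_eq (huv : u * v = 0) {f : A ⧸ Ideal.span {u} →ₗ[A] M}
    (hf : Injective f) (hfg : Exact f g) {m : M} (hm : g m = 1) (hvm : v • m = f 1) :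
    Nonempty (M ≃ₗ[A] A) := by
  have hg_smul : ∀ r : A, g (r • m) = Ideal.Quotient.mk _ r := by
    intro r
    rw [map_smul, hm, Ideal.Quotient.smul_one]
  have hf_mk : ∀ r : A, f (Ideal.Quotient.mk _ r) = (r * v) • m := by
    intro r
    rw [mul_smul, hvm, ← map_smul, Ideal.Quotient.smul_one]
  refine ⟨(LinearEquiv.ofBijective (LinearMap.toSpanSingleton A M m) ⟨?_, ?_⟩).symm⟩
  · rw [injective_iff_map_eq_zero]
    intro r hr
    rw [LinearMap.toSpanSingleton_apply] at hr
    obtain ⟨w, rfl⟩ := Ideal.mem_span_singleton'.1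
      (Ideal.Quotient.eq_zero_iff_mem.1 (by rw [← hg_smul, hr, map_zero]))
    obtain ⟨y, rfl⟩ := Ideal.mem_span_singleton'.1
      (Ideal.Quotient.eq_zero_iff_mem.1 (hf (by rw [hf_mk, hr, map_zero])))
    rw [mul_assoc, huv, mul_zero]
  · intro x
    obtain ⟨r, hr⟩ := Ideal.Quotient.mk_surjective (g x)
    obtain ⟨a, ha⟩ := (hfg (x - r • m)).1 (by rw [map_sub, hg_smul, hr, sub_self])
    obtain ⟨s, rfl⟩ := Ideal.Quotient.mk_surjective a
    refine ⟨r + s * v, ?_⟩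
    rw [LinearMap.toSpanSingleton_apply, add_smul, ← hf_mk, ha, add_sub_cancel]

theorem nonempty_linearEquiv_self_or_prod_of_exact (huv : u * v = 0)
    (hparity : ∀ r : A,
      r ∈ Ideal.span {u} ⊔ Ideal.span {v} ∨ r - 1 ∈ Ideal.span {u} ⊔ Ideal.span {v})
    {f : A ⧸ Ideal.span {u} →ₗ[A] M} (hf : Injective f) (hg : Surjective g) (hfg : Exact f g) :
    Nonempty (M ≃ₗ[A] A) ∨ Nonempty (M ≃ₗ[A] (A ⧸ Ideal.span {u}) × (A ⧸ Ideal.span {v})) := by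
  obtain ⟨m₀, hm₀⟩ := hg 1
  obtain ⟨a, ha⟩ := (hfg (v • m₀)).1 <| by
    rw [map_smul, hm₀, Ideal.Quotient.smul_one, Ideal.Quotient.eq_zero_iff_mem]
    exact Ideal.mem_span_singleton_self v
  obtain ⟨r, rfl⟩ := Ideal.Quotient.mk_surjective a
  have adjust : ∀ δ : A, r - δ ∈ Ideal.span {u} ⊔ Ideal.span {v} →
      ∃ m, g m = 1 ∧ v • m = f (Ideal.Quotient.mk _ δ) := by
    intro δ hδ
    obtain ⟨x, hx, y, hy, hxy⟩ := Submodule.mem_sup.1 hδ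
    obtain ⟨w, rfl⟩ := Ideal.mem_span_singleton'.1 hy
    refine ⟨m₀ - f (Ideal.Quotient.mk _ w), ?_, ?_⟩
    · rw [map_sub, hm₀, hfg.apply_apply_eq_zero, sub_zero]
    · rw [smul_sub, ← ha, ← map_smul, ← map_sub]
      congr 1
      rw [Algebra.smul_def, Ideal.Quotient.algebraMap_eq, ← map_mul, ← map_sub, Ideal.Quotient.eq]
      convert hx using 1
      linear_combination -hxy
  rcases hparity r with h0 | h1
  · obtain ⟨m, hm, hvm⟩ := adjust 0 (by rwa [sub_zero])
    exact Or.inr (nonempty_linearEquiv_prod_of_smul_eq_zero hf hfg hm (by simp [hvm]))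
  · obtain ⟨m, hm, hvm⟩ := adjust 1 h1
    exact Or.inl (nonempty_linearEquiv_self_of_smul_eq huv hf hfg hm hvm)

end Extension

theorem t_mul_t : t * t = 1 := by
  rw [t, ← map_mul, ← map_one (Ideal.Quotient.mk _), Ideal.Quotient.eq]
  exact Ideal.subset_span (by simp [sq])

theorem exists_intCast_sub_mem_I (r : R) : ∃ n : ℤ, r - n ∈ I := by
  obtain ⟨p, rfl⟩ := Ideal.Quotient.mk_surjective r
  obtain ⟨q, hq⟩ := Polynomial.X_sub_C_dvd_sub_C_eval (a := 1) (p := p)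
  refine ⟨p.eval 1, Ideal.mem_span_singleton'.2 ⟨Ideal.Quotient.mk _ q, ?_⟩⟩
  have h := congrArg (Ideal.Quotient.mk (Ideal.span {Polynomial.X ^ 2 - 1})) hq
  rw [map_sub, map_mul, map_sub, Polynomial.C_1, map_one,
    ← RingHom.comp_apply _ Polynomial.C, eq_intCast] at h
  rw [h, mul_comm, t]

theorem mem_or_sub_one_mem_I_sup_J (r : R) : r ∈ I ⊔ J ∨ r - 1 ∈ I ⊔ J := by
  obtain ⟨n, hn⟩ := exists_intCast_sub_mem_I r
  have two_mem : (2 : R) ∈ I ⊔ J := by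
    have h := sub_mem (Ideal.mem_sup_right (Ideal.mem_span_singleton_self _ : t + 1 ∈ J))
      (Ideal.mem_sup_left (Ideal.mem_span_singleton_self _ : t - 1 ∈ I))
    rwa [add_sub_sub_cancel, one_add_one_eq_two] at h
  obtain ⟨k, hk⟩ := Int.even_or_odd' n
  have hmem : r - n + k * 2 ∈ I ⊔ J :=
    add_mem (Ideal.mem_sup_left hn) (Ideal.mul_mem_left _ _ two_mem)
  rcases hk with rfl | rfl
  · left
    convert hmem using 1
    push_cast
    ring
  · right
    convert hmem using 1
    push_cast
    ring

theorem extension_of_RmodI_and_RmodJ (M : Type) [AddCommGroup M] [Module R M]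
    (h : (∃ (f : (R ⧸ I) →ₗ[R] M) (g : M →ₗ[R] (R ⧸ J)),
            Function.Injective f ∧ Function.Surjective g ∧
            LinearMap.range f = LinearMap.ker g) ∨
         (∃ (f : (R ⧸ J) →ₗ[R] M) (g : M →ₗ[R] (R ⧸ I)),
            Function.Injective f ∧ Function.Surjective g ∧
            LinearMap.range f = LinearMap.ker g)) :
    Nonempty (M ≃ₗ[R] R) ∨ Nonempty (M ≃ₗ[R] ((R ⧸ I) × (R ⧸ J))) := by
  rcases h with ⟨f, g, hf, hg, hfg⟩ | ⟨f, g, hf, hg, hfg⟩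
  · rw [eq_comm, ← LinearMap.exact_iff] at hfg
    exact nonempty_linearEquiv_self_or_prod_of_exact (A := R) (u := t - 1) (v := t + 1)
      (by linear_combination t_mul_t) mem_or_sub_one_mem_I_sup_J hf hg hfg
  · rw [eq_comm, ← LinearMap.exact_iff] at hfg
    have hparity (r : R) : r ∈ J ⊔ I ∨ r - 1 ∈ J ⊔ I := by
      rw [sup_comm]
      exact mem_or_sub_one_mem_I_sup_J r
    obtain h | h := nonempty_linearEquiv_self_or_prod_of_exact (A := R) (u := t + 1) (v := t - 1)
      (by linear_combination t_mul_t) hparity hf hg hfg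
    · exact Or.inl h
    · exact Or.inr (h.map (·.trans (LinearEquiv.prodComm R _ _)))
end
end

section
/- For the ring R = ℤ[t]/(t²−1) with I = (t−1), the short exact sequence of R-modules 0 → I/2I → R/2I → R/I → 0 (given by the inclusion of I/2I into R/2I and the natural quotient map R/2I → R/I) does not split; equivalently, there is no R-linear section of the quotient map R/2I → R/I. -/
/-!
A section `s` of `R/2I → R/I` is determined by a lift `x ∈ R` of `s 1`, which must satisfy
`x ≡ 1 mod I` and `(t - 1) x ∈ 2I`. Evaluating at `t = -1` sends `t - 1` to `-2`, so the image
`n ∈ ℤ` of `x` is odd by the first condition while `-2n ∈ 4ℤ` by the second: a contradiction.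
-/

noncomputable section

theorem Ideal.exists_lift_of_mapQ_comp_eq_id {A : Type*} [CommRing A] {K L : Ideal A}
    (hKL : K ≤ L) (s : (A ⧸ L) →ₗ[A] (A ⧸ K))
    (hs : Submodule.mapQ K L LinearMap.id hKL ∘ₗ s = LinearMap.id) :
    ∃ x : A, x - 1 ∈ L ∧ ∀ a ∈ L, a * x ∈ K := by
  obtain ⟨x, hx⟩ := Ideal.Quotient.mk_surjective (I := K) (s (Submodule.Quotient.mk 1))
  refine ⟨x, ?_, fun a ha => ?_⟩
  · have h := LinearMap.congr_fun hs (Submodule.Quotient.mk 1)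
    rw [LinearMap.comp_apply, ← hx] at h
    exact (Submodule.Quotient.eq L).mp h
  · have h := map_smul s a (Submodule.Quotient.mk 1)
    rw [← Submodule.Quotient.mk_smul, smul_eq_mul, mul_one,
      (Submodule.Quotient.mk_eq_zero L).mpr ha, map_zero, ← hx] at h
    exact Ideal.Quotient.eq_zero_iff_mem.mp h.symm

def evalNegOne : R →+* ℤ :=
  Ideal.Quotient.lift _ (Polynomial.evalRingHom (-1)) fun p hp => by
    obtain ⟨q, rfl⟩ := Ideal.mem_span_singleton'.mp hp
    simp

theorem evalNegOne_t : evalNegOne t = -1 := by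
  simp [evalNegOne, t]

theorem RmodTwoI_to_RmodI_no_section :
    ¬ ∃ s : (R ⧸ I) →ₗ[R] (R ⧸ (Ideal.span ({2} : Set R) * I)),
      (Submodule.mapQ (Ideal.span ({2} : Set R) * I) I LinearMap.id
          (by rw [Submodule.comap_id]; exact Ideal.mul_le_right)) ∘ₗ s
        = LinearMap.id := by
  rintro ⟨s, hs⟩
  obtain ⟨x, hx, hIx⟩ := Ideal.exists_lift_of_mapQ_comp_eq_id _ s hs
  have hdvd₁ : t - 1 ∣ x - 1 := Ideal.mem_span_singleton.mp hx
  have hdvd₂ : 2 * (t - 1) ∣ (t - 1) * x := by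
    rw [← Ideal.mem_span_singleton, ← Ideal.span_singleton_mul_span_singleton]
    exact hIx _ (Ideal.mem_span_singleton_self _)
  have hodd := map_dvd evalNegOne hdvd₁
  have heven := map_dvd evalNegOne hdvd₂
  simp only [map_sub, map_mul, map_one, map_ofNat, evalNegOne_t] at hodd heven
  norm_num at hodd heven
  omega
end
end

section
/- For the ring R = ℤ[t]/(t²−1) with I = (t−1), the R-module Hom_R(R/2I, R) is isomorphic as an R-module to R/I. -/
noncomputable section

open Polynomial

lemma key0 : (t + 1) * (t - 1) = 0 := by
  have h : ((t+1)*(t-1) : R) = Ideal.Quotient.mk _ (X^2 - 1) := by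
    simp only [t, map_sub, map_add, map_one, map_pow]
    ring
  rw [h, Ideal.Quotient.eq_zero_iff_mem]
  exact Ideal.subset_span rfl

lemma hX1 : (X + 1 : Polynomial ℤ) ≠ 0 := by
  have := monic_X_add_C (1 : ℤ)
  simpa using this.ne_zero

lemma hXm1 : (X - 1 : Polynomial ℤ) ≠ 0 := by
  have := monic_X_sub_C (1 : ℤ)
  simpa using this.ne_zero

lemma keyB (x : R) (h : (t + 1) * x = 0) : x ∈ I := by
  obtain ⟨p, rfl⟩ := Ideal.Quotient.mk_surjective x
  have h2 : ((X + 1) * p : Polynomial ℤ) ∈ Ideal.span ({X ^ 2 - 1} : Set (Polynomial ℤ)) := by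
    rw [← Ideal.Quotient.eq_zero_iff_mem]
    simpa only [t, map_mul, map_add, map_one] using h
  rw [Ideal.mem_span_singleton] at h2
  obtain ⟨q, hq⟩ := h2
  have hfac : (X^2 - 1 : Polynomial ℤ) = (X + 1) * (X - 1) := by ring
  rw [hfac, mul_assoc] at hq
  have hp : p = (X - 1) * q := mul_left_cancel₀ hX1 hq
  rw [I, Ideal.mem_span_singleton]
  refine ⟨Ideal.Quotient.mk _ q, ?_⟩
  rw [hp]
  simp only [t, map_mul, map_sub, map_one]

lemma prime2 : Prime (2 : Polynomial ℤ) := by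
  have : (2 : Polynomial ℤ) = C 2 := by norm_num
  rw [this, Polynomial.prime_C_iff]
  exact Int.prime_two

lemma keyC (x : R) (h : 2 * (t - 1) * x = 0) : ∃ y : R, x = (t + 1) * y := by
  obtain ⟨p, rfl⟩ := Ideal.Quotient.mk_surjective x
  have h2 : (2 * (X - 1) * p : Polynomial ℤ) ∈ Ideal.span ({X ^ 2 - 1} : Set (Polynomial ℤ)) := by
    rw [← Ideal.Quotient.eq_zero_iff_mem]
    simpa only [t, map_mul, map_sub, map_one, map_ofNat] using h
  rw [Ideal.mem_span_singleton] at h2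
  obtain ⟨q, hq⟩ := h2
  have hq' : (X - 1) * (2 * p) = (X - 1) * ((X + 1) * q) := by
    have : (X - 1) * (2 * p) = (X^2 - 1) * q := by rw [← hq]; ring
    rw [this]; ring
  have h2p : (2 * p : Polynomial ℤ) = (X + 1) * q := mul_left_cancel₀ hXm1 hq'
  have hdvd : (2 : Polynomial ℤ) ∣ (X + 1) * q := ⟨p, h2p.symm⟩
  have h2q : (2 : Polynomial ℤ) ∣ q := by
    rcases prime2.dvd_mul.mp hdvd with h | h
    · exfalso
      obtain ⟨r, hr⟩ := h
      have := congrArg (fun f => Polynomial.coeff f 0) hr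
      simp [Polynomial.coeff_add, Polynomial.coeff_X_zero] at this
      omega
    · exact h
  obtain ⟨q', rfl⟩ := h2q
  have hp : p = (X + 1) * q' := by
    have : (2 : Polynomial ℤ) * p = 2 * ((X + 1) * q') := by rw [h2p]; ring
    exact mul_left_cancel₀ two_ne_zero this
  refine ⟨Ideal.Quotient.mk _ q', ?_⟩
  rw [hp]
  simp only [t, map_mul, map_add, map_one]

def K : Ideal R := Ideal.span ({2} : Set R) * I

lemma K_eq : K = Ideal.span {2 * (t - 1)} := by
  rw [K, I, Ideal.span_singleton_mul_span_singleton]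

lemma hker (x : R) : K ≤ LinearMap.ker (LinearMap.lsmul R R ((t + 1) * x)) := by
  rw [K_eq]
  intro z hz
  rw [Ideal.mem_span_singleton] at hz
  obtain ⟨c, rfl⟩ := hz
  simp only [LinearMap.mem_ker, LinearMap.lsmul_apply, smul_eq_mul]
  linear_combination (2 * x * c) * key0

/-- For each x : R, the map R/K → R, z ↦ (t+1)*x*z. -/
def Bx (x : R) : (R ⧸ K) →ₗ[R] R :=
  Submodule.liftQ K (LinearMap.lsmul R R ((t + 1) * x)) (hker x)

lemma Bx_mk (x z : R) : Bx x (Submodule.Quotient.mk z) = (t + 1) * x * z := by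
  unfold Bx
  rw [Submodule.liftQ_apply, LinearMap.lsmul_apply, smul_eq_mul]

/-- The linear map R → Hom(R/K, R). -/
def B1 : R →ₗ[R] ((R ⧸ K) →ₗ[R] R) where
  toFun := Bx
  map_add' x y := by
    apply LinearMap.ext
    intro z
    obtain ⟨w, rfl⟩ := Submodule.Quotient.mk_surjective K z
    simp only [Bx_mk, LinearMap.add_apply, Bx_mk]
    ring
  map_smul' c x := by
    apply LinearMap.ext
    intro z
    obtain ⟨w, rfl⟩ := Submodule.Quotient.mk_surjective K z
    simp only [Bx_mk, RingHom.id_apply, LinearMap.smul_apply, Bx_mk, smul_eq_mul]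
    ring

lemma hkerF : I ≤ LinearMap.ker B1 := by
  intro x hx
  rw [I, Ideal.mem_span_singleton] at hx
  obtain ⟨c, rfl⟩ := hx
  rw [LinearMap.mem_ker]
  apply LinearMap.ext
  intro z
  obtain ⟨w, rfl⟩ := Submodule.Quotient.mk_surjective K z
  show Bx _ _ = 0
  rw [Bx_mk]
  linear_combination (c * w) * key0

def F : (R ⧸ I) →ₗ[R] ((R ⧸ K) →ₗ[R] R) := Submodule.liftQ I B1 hkerF

lemma F_mk (x z : R) : F (Submodule.Quotient.mk x) (Submodule.Quotient.mk z)
    = (t + 1) * x * z := by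
  simp only [F, Submodule.liftQ_apply]
  exact Bx_mk x z

lemma F_inj : Function.Injective F := by
  rw [← LinearMap.ker_eq_bot, eq_bot_iff]
  intro x hx
  obtain ⟨w, rfl⟩ := Submodule.Quotient.mk_surjective I x
  rw [LinearMap.mem_ker] at hx
  have h1 : (t + 1) * w * 1 = 0 := by
    rw [← F_mk w 1, hx]; rfl
  rw [mul_one] at h1
  have := keyB w h1
  rw [Submodule.mem_bot, Submodule.Quotient.mk_eq_zero]
  exact this

lemma F_surj : Function.Surjective F := by
  intro φ
  set a := φ (Submodule.Quotient.mk 1) with ha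
  have hmem : 2 * (t - 1) ∈ K := by
    rw [K_eq]; exact Ideal.subset_span rfl
  have hz : (Submodule.Quotient.mk (2 * (t - 1)) : R ⧸ K) = 0 :=
    (Submodule.Quotient.mk_eq_zero _).mpr hmem
  have h0 : 2 * (t - 1) * a = 0 := by
    have h1 : ((2 * (t - 1)) • (Submodule.Quotient.mk 1 : R ⧸ K))
        = Submodule.Quotient.mk (2 * (t - 1)) := by
      rw [← Submodule.Quotient.mk_smul, smul_eq_mul, mul_one]
    calc 2 * (t - 1) * a = (2 * (t - 1)) • a := by rw [smul_eq_mul]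
      _ = φ ((2 * (t - 1)) • (Submodule.Quotient.mk 1 : R ⧸ K)) := (φ.map_smul _ _).symm
      _ = φ 0 := by rw [h1, hz]
      _ = 0 := φ.map_zero
  obtain ⟨y, hy⟩ := keyC a h0
  refine ⟨Submodule.Quotient.mk y, ?_⟩
  apply LinearMap.ext
  intro z
  obtain ⟨w, rfl⟩ := Submodule.Quotient.mk_surjective K z
  rw [F_mk]
  have h2 : φ (Submodule.Quotient.mk w) = w * a := by
    have h3 : (Submodule.Quotient.mk w : R ⧸ K) = w • Submodule.Quotient.mk 1 := by
      rw [← Submodule.Quotient.mk_smul, smul_eq_mul, mul_one]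
    rw [h3, φ.map_smul, smul_eq_mul, ← ha]
  rw [h2, hy]
  ring

theorem hom_RmodTwoI_R :
    Nonempty (((R ⧸ (Ideal.span ({2} : Set R) * I)) →ₗ[R] R) ≃ₗ[R] (R ⧸ I)) :=
  ⟨(LinearEquiv.ofBijective F ⟨F_inj, F_surj⟩).symm⟩
end
end

section
/- For the ring R = ℤ[t]/(t²−1) with I = (t−1), the first Ext group Ext¹_R(R/2I, R) is isomorphic as an R-module to R/(2,I) (in particular, as an abelian group it is ℤ/2). -/
noncomputable section

/-- `Ext¹_R(M, N)`, the first Ext group of the `R`-modules `M` and `N`, defined via the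
derived-functor `Ext` bifunctor on the category of `R`-modules. -/
def ext1 (M N : Type) [AddCommGroup M] [Module R M] [AddCommGroup N] [Module R N] :
    ModuleCat R :=
  ((Ext R (ModuleCat R) 1).obj (Opposite.op (ModuleCat.of R M))).obj (ModuleCat.of R N)

/-!
Since `2I = (2(t - 1))` and the annihilators in `R` are `ann(2(t - 1)) = ann(t - 1) = (t + 1)` and
`ann(t + 1) = (t - 1)`, the module `R/2I` has the free resolution
`⋯ → R --(t-1)--> R --(t+1)--> R --2(t-1)--> R → R/2I → 0`.
Applying `Hom(-, R) ≅ R`, `Ext¹(R/2I, R)` is the homology of `R --2(t-1)--> R --(t+1)--> R`,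
i.e. `(t - 1)R / 2(t - 1)R ≅ R / ((2) + ann(t - 1)) = R / (2, t + 1) = R / (2, t - 1)`.
-/

open CategoryTheory Polynomial
open LinearMap (mulLeft)

universe u v

section QuotientOfDomain

variable {D : Type*} [CommRing D] [IsDomain D] [DecompositionMonoid D]

theorem ker_mulLeft_mk_eq_range {n p q u : D} (hn : n = p * q) (hp : p ≠ 0)
    (hqu : IsRelPrime q u) :
    LinearMap.ker (mulLeft (D ⧸ Ideal.span {n})
        (Ideal.Quotient.mk (Ideal.span {n}) (u * p))) =
      LinearMap.range (mulLeft (D ⧸ Ideal.span {n})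
        (Ideal.Quotient.mk (Ideal.span {n}) q)) := by
  subst hn
  refine le_antisymm (fun x hx ↦ ?_) (LinearMap.range_le_ker_iff.mpr ?_)
  · obtain ⟨f, rfl⟩ := Ideal.Quotient.mk_surjective x
    obtain ⟨g, hg⟩ : p * q ∣ u * p * f := by
      simpa [← map_mul, Ideal.Quotient.eq_zero_iff_mem, Ideal.mem_span_singleton] using hx
    have hq : q ∣ u * f := ⟨g, mul_left_cancel₀ hp (by linear_combination hg)⟩
    obtain ⟨h, rfl⟩ := hqu.dvd_of_dvd_mul_left hq
    exact ⟨Ideal.Quotient.mk _ h, by simp⟩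
  · refine LinearMap.ext_ring ?_
    rw [LinearMap.comp_apply, LinearMap.mulLeft_apply, LinearMap.mulLeft_apply, mul_one,
      ← map_mul, LinearMap.zero_apply, Ideal.Quotient.eq_zero_iff_mem, Ideal.mem_span_singleton]
    exact ⟨u, by ring⟩

end QuotientOfDomain

def CategoryTheory.ShortComplex.moduleCatHomologyEquivOfSurjective {k M : Type*} [Ring k]
    [AddCommGroup M] [Module k M] (S : ShortComplex (ModuleCat.{v} k))
    (ψ : M →ₗ[k] LinearMap.ker S.g.hom) (hψ : Function.Surjective ψ) :
    S.homology ≃ₗ[k] M ⧸ (LinearMap.range S.moduleCatToCycles).comap ψ :=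
  S.moduleCatHomologyIso.toLinearEquiv ≪≫ₗ
    ((Submodule.quotEquivOfEq _ _ (by rw [LinearMap.ker_comp, Submodule.ker_mkQ])) ≪≫ₗ
      ((LinearMap.range S.moduleCatToCycles).mkQ ∘ₗ ψ).quotKerEquivOfSurjective
        ((Submodule.mkQ_surjective _).comp hψ)).symm

section MulLeftComplexes

variable {A : Type u} [CommRing A]

lemma range_mulLeft_eq_span_singleton (a : A) :
    LinearMap.range (mulLeft A a) = Ideal.span {a} := by
  ext x
  simp [Ideal.mem_span_singleton', mul_comm]

lemma mul_mem_span_singleton_mul_iff {u e r : A} :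
    e * r ∈ Ideal.span {u * e} ↔ r ∈ Ideal.span {u} ⊔ LinearMap.ker (mulLeft A e) := by
  simp only [Ideal.mem_span_singleton', Submodule.mem_sup, LinearMap.mem_ker,
    LinearMap.mulLeft_apply]
  constructor
  · rintro ⟨x, hx⟩
    exact ⟨x * u, ⟨x, rfl⟩, r - x * u, by linear_combination -hx, by ring⟩
  · rintro ⟨_, ⟨x, rfl⟩, k, hk, rfl⟩
    exact ⟨x, by linear_combination -hk⟩

lemma mul_succ_eq_zero_of_ker_eq_range {c : ℕ → A}
    (hc : ∀ n, LinearMap.ker (mulLeft A (c n)) = LinearMap.range (mulLeft A (c (n + 1))))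
    (n : ℕ) : c n * c (n + 1) = 0 :=
  show c (n + 1) ∈ LinearMap.ker (mulLeft A (c n)) from hc n ▸ ⟨1, mul_one _⟩

variable (c : ℕ → A)
  (hc : ∀ n, LinearMap.ker (mulLeft A (c n)) = LinearMap.range (mulLeft A (c (n + 1))))

def mulLeftChainComplex : ChainComplex (ModuleCat.{u} A) ℕ :=
  ChainComplex.of (fun _ ↦ ModuleCat.of A A) (fun n ↦ ModuleCat.ofHom (mulLeft A (c n)))
    fun n ↦ by ext; simp [mul_succ_eq_zero_of_ker_eq_range hc n]

lemma mulLeftChainComplex_d (n : ℕ) :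
    (mulLeftChainComplex c hc).d (n + 1) n = ModuleCat.ofHom (mulLeft A (c n)) := by
  simp [mulLeftChainComplex]

lemma mulLeftChainComplex_exactAt_succ (n : ℕ) : (mulLeftChainComplex c hc).ExactAt (n + 1) := by
  rw [HomologicalComplex.exactAt_iff' _ (n + 1 + 1) (n + 1) n (by simp) (by simp),
    ShortComplex.moduleCat_exact_iff_range_eq_ker]
  simp only [HomologicalComplex.shortComplexFunctor'_obj_f,
    HomologicalComplex.shortComplexFunctor'_obj_g, mulLeftChainComplex_d]
  exact (hc n).symm

def mulLeftAugmentation :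
    (mulLeftChainComplex c hc).X 0 ⟶ ModuleCat.of A (A ⧸ Ideal.span {c 0}) :=
  ModuleCat.ofHom (Submodule.mkQ _)

def mulLeftResolutionπ :
    mulLeftChainComplex c hc ⟶
      (ChainComplex.single₀ (ModuleCat A)).obj (ModuleCat.of A (A ⧸ Ideal.span {c 0})) :=
  (ChainComplex.toSingle₀Equiv _ _).symm ⟨mulLeftAugmentation c hc, by
    ext
    simp only [mulLeftChainComplex_d]
    exact (Submodule.Quotient.mk_eq_zero _).mpr
      (Ideal.mul_mem_right _ _ (Ideal.mem_span_singleton_self _))⟩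

instance quasiIso_mulLeftResolutionπ : QuasiIso (mulLeftResolutionπ c hc) where
  quasiIsoAt
    | 0 => by
      rw [ChainComplex.quasiIsoAt₀_iff, ShortComplex.quasiIso_iff_of_zeros' _ rfl rfl rfl]
      refine ⟨?_, ?_⟩
      · rw [ShortComplex.moduleCat_exact_iff_range_eq_ker]
        simp only [HomologicalComplex.shortComplexFunctor'_obj_f, mulLeftResolutionπ,
          HomologicalComplex.shortComplexFunctor'_map_τ₂,
          ChainComplex.toSingle₀Equiv_symm_apply_f_zero, mulLeftChainComplex_d]
        exact (range_mulLeft_eq_span_singleton (c 0)).trans (Submodule.ker_mkQ _).symm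
      · rw [ModuleCat.epi_iff_surjective]
        exact Submodule.mkQ_surjective _
    | n + 1 => by
      rw [quasiIsoAt_iff_exactAt' _ _ (ChainComplex.exactAt_succ_single_obj _ _)]
      exact mulLeftChainComplex_exactAt_succ c hc n

def mulLeftResolution : ProjectiveResolution (ModuleCat.of A (A ⧸ Ideal.span {c 0})) where
  complex := mulLeftChainComplex c hc
  projective _ := (IsProjective.iff_projective _).mp (inferInstanceAs (Module.Projective A A))
  π := mulLeftResolutionπ c hc

def mulLeftShortComplex (a b : A) (hab : a * b = 0) : ShortComplex (ModuleCat.{u} A) :=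
  ShortComplex.mk (ModuleCat.ofHom (mulLeft A a)) (ModuleCat.ofHom (mulLeft A b))
    (by ext; simp [mul_comm b, hab])

def mulLeftShortComplexHomologyEquiv {u e b : A} (hab : u * e * b = 0)
    (hb : LinearMap.ker (mulLeft A b) = LinearMap.range (mulLeft A e)) :
    (mulLeftShortComplex (u * e) b hab).homology ≃ₗ[A]
      A ⧸ (Ideal.span {u} ⊔ LinearMap.ker (mulLeft A e)) :=
  (ShortComplex.moduleCatHomologyEquivOfSurjective _
    ((mulLeft A e).codRestrict _ fun r ↦ hb.ge (LinearMap.mem_range_self _ r)) (by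
      rintro ⟨x, hx⟩
      obtain ⟨r, rfl⟩ := hb.le hx
      exact ⟨r, rfl⟩)) ≪≫ₗ
    Submodule.quotEquivOfEq _ _ (by
      ext r
      rw [← mul_mem_span_singleton_mul_iff, ← range_mulLeft_eq_span_singleton]
      exact exists_congr fun _ ↦ Subtype.ext_iff)

def homSelfIso : ModuleCat.of A (ModuleCat.of A A ⟶ ModuleCat.of A A) ≅ ModuleCat.of A A :=
  (ModuleCat.homLinearEquiv.trans (LinearMap.ringLmapEquivSelf A A A)).toModuleIso

lemma mulLeftChainComplex_d_comp_apply_one (n : ℕ) (f : ModuleCat.of A A ⟶ ModuleCat.of A A) :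
    ((mulLeftChainComplex c hc).d (n + 1) n ≫ f).hom (1 : A) = c n * f.hom 1 := by
  rw [mulLeftChainComplex_d]
  exact f.hom.map_smul (c n) 1

def linearYonedaObjMulLeftScIso :
    ((mulLeftChainComplex c hc).linearYonedaObj A (ModuleCat.of A A)).sc' 0 1 2 ≅
      mulLeftShortComplex (c 0) (c 1) (mul_succ_eq_zero_of_ker_eq_range hc 0) :=
  ShortComplex.isoMk homSelfIso homSelfIso homSelfIso
    (by ext f; exact (mulLeftChainComplex_d_comp_apply_one c hc 0 f).symm)
    (by ext f; exact (mulLeftChainComplex_d_comp_apply_one c hc 1 f).symm)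

def extOneIsoHomologyMulLeftShortComplex :
    ((Ext A (ModuleCat.{u} A) 1).obj (Opposite.op (ModuleCat.of A (A ⧸ Ideal.span {c 0})))).obj
        (ModuleCat.of A A) ≅
      (mulLeftShortComplex (c 0) (c 1) (mul_succ_eq_zero_of_ker_eq_range hc 0)).homology :=
  (mulLeftResolution c hc).isoExt 1 _ ≪≫
    HomologicalComplex.homologyIsoSc' _ 0 1 2 (by simp) (by simp) ≪≫
      ShortComplex.homologyMapIso (linearYonedaObjMulLeftScIso c hc)

end MulLeftComplexes

lemma X_sq_sub_one_eq_mul : (X ^ 2 - 1 : ℤ[X]) = (X - 1) * (X + 1) := by ring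

lemma isRelPrime_X_add_one_two : IsRelPrime (X + 1 : ℤ[X]) 2 := by
  rw [← C_1, ← sub_neg_eq_add, ← C_neg, (irreducible_X_sub_C _).isRelPrime_iff_not_dvd,
    dvd_iff_isRoot]
  simp

theorem ker_mulLeft_t_add_one :
    LinearMap.ker (mulLeft R (t + 1)) = LinearMap.range (mulLeft R (t - 1)) := by
  simpa [t] using ker_mulLeft_mk_eq_range (X_sq_sub_one_eq_mul.trans (mul_comm _ _))
    (X_add_C_ne_zero 1) (isRelPrime_one_right (x := (X - 1 : ℤ[X])))

theorem ker_mulLeft_t_sub_one :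
    LinearMap.ker (mulLeft R (t - 1)) = LinearMap.range (mulLeft R (t + 1)) := by
  simpa [t] using ker_mulLeft_mk_eq_range X_sq_sub_one_eq_mul (X_sub_C_ne_zero 1)
    (isRelPrime_one_right (x := (X + 1 : ℤ[X])))

theorem ker_mulLeft_two_mul_t_sub_one :
    LinearMap.ker (mulLeft R (2 * (t - 1))) = LinearMap.range (mulLeft R (t + 1)) := by
  simpa [t, map_ofNat] using ker_mulLeft_mk_eq_range X_sq_sub_one_eq_mul (X_sub_C_ne_zero 1)
    isRelPrime_X_add_one_two

lemma span_two_sup_ker_mulLeft_t_sub_one :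
    Ideal.span {2} ⊔ LinearMap.ker (mulLeft R (t - 1)) = Ideal.span {2, t - 1} := by
  rw [ker_mulLeft_t_sub_one, range_mulLeft_eq_span_singleton, ← Ideal.span_insert,
    show t + 1 = t - 1 + 1 * 2 by ring, Ideal.span_pair_add_mul_left]

def resolutionCoeff : ℕ → R
  | 0 => 2 * (t - 1)
  | 1 => t + 1
  | 2 => t - 1
  | n + 3 => resolutionCoeff (n + 1)

theorem ker_mulLeft_resolutionCoeff : ∀ n, LinearMap.ker (mulLeft R (resolutionCoeff n)) =
    LinearMap.range (mulLeft R (resolutionCoeff (n + 1)))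
  | 0 => ker_mulLeft_two_mul_t_sub_one
  | 1 => ker_mulLeft_t_add_one
  | 2 => ker_mulLeft_t_sub_one
  | n + 3 => ker_mulLeft_resolutionCoeff (n + 1)

theorem ext1_RmodTwoI_R :
    Nonempty ((ext1 (R ⧸ (Ideal.span ({2} : Set R) * I)) R) ≃ₗ[R]
      (R ⧸ Ideal.span ({2, t - 1} : Set R))) := by
  rw [I, Ideal.span_singleton_mul_span_singleton, ← span_two_sup_ker_mulLeft_t_sub_one]
  exact ⟨(extOneIsoHomologyMulLeftShortComplex resolutionCoeff
    ker_mulLeft_resolutionCoeff).toLinearEquiv ≪≫ₗ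
      mulLeftShortComplexHomologyEquiv _ ker_mulLeft_t_add_one⟩
end
end
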